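/- arXiv:1212.3840 — 2 statements merged into one kernel-verified Lean document; each statement's English description precedes it below -/
import Mathlib

section
/- For every natural number k ≥ 0, every α ∈ [0,1], and every nonnegative sequence (a_i)_{i∈ℕ} with only finitely many nonzero terms, we have (∑_i a_i)^{k+α} ≤ (k+1) · ∑_{i_1,...,i_k} a_{i_1}···a_{i_k} · (∑_{j ≤ min{i_1,...,i_k}} a_j)^α. -/
/-!
Expanding `(∑ a)^(k+1)` gives a sum over all `(k+1)`-tuples `J`. Every tuple attains its minimum
at some position `s`; removing that entry leaves a `k`-tuple `I` and an index `j ≤ min I`. Summing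
over the `k+1` possible positions therefore gives
`(∑ a)^(k+1) ≤ (k+1) ∑_I a_I · m_I`, where `m_I = ∑_{j ≤ min I} a_j`. Since `m_I ≤ S = ∑ a`
and `α ≤ 1`, we have `S^(α-1) m_I ≤ m_I^α`; multiplying the previous bound by `S^(α-1)` finishes.
-/

open Finset

lemma Finset.sum_le_sum_sum_filter_of_forall_exists {α σ M : Type*} [AddCommMonoid M]
    [PartialOrder M] [IsOrderedAddMonoid M] {s : Finset α} {t : Finset σ} {f : α → M}
    (hf : ∀ x ∈ s, 0 ≤ f x) (P : σ → α → Prop) [∀ i, DecidablePred (P i)]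
    (hP : ∀ x ∈ s, ∃ i ∈ t, P i x) :
    ∑ x ∈ s, f x ≤ ∑ i ∈ t, ∑ x ∈ s.filter (P i), f x := by
  simp_rw [sum_filter]
  rw [sum_comm]
  refine sum_le_sum fun x hx => ?_
  obtain ⟨i, hi, hPi⟩ := hP x hx
  calc f x = if P i x then f x else 0 := (if_pos hPi).symm
    _ ≤ ∑ j ∈ t, if P j x then f x else 0 :=
      single_le_sum (f := fun j => if P j x then f x else 0)
        (fun j _ => by split_ifs <;> simp [hf x hx]) hi

section

variable {ι κ R : Type*} [Fintype ι] [LinearOrder ι]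

def sumBelowMin [AddCommMonoid R] [Fintype κ] (a : ι → R) (I : κ → ι) : R :=
  ∑ j ∈ univ.filter fun j => ∀ t, j ≤ I t, a j

variable [AddCommMonoid R] [PartialOrder R] [IsOrderedAddMonoid R] [Fintype κ] {a : ι → R}

lemma sumBelowMin_nonneg (ha : ∀ i, 0 ≤ a i) (I : κ → ι) : 0 ≤ sumBelowMin a I :=
  sum_nonneg fun j _ => ha j

lemma sumBelowMin_le_sum (ha : ∀ i, 0 ≤ a i) (I : κ → ι) : sumBelowMin a I ≤ ∑ i, a i :=
  sum_le_univ_sum_of_nonneg ha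

end

section

variable {ι R : Type*} [Fintype ι] [LinearOrder ι]

lemma sum_filter_isMinAt_prod_eq [CommSemiring R] {k : ℕ} (a : ι → R) (s : Fin (k + 1)) :
    ∑ J ∈ univ.filter (fun J : Fin (k + 1) → ι => ∀ t, J s ≤ J t), ∏ t, a (J t) =
      ∑ I : Fin k → ι, (∏ t, a (I t)) * sumBelowMin a I := by
  rw [sum_filter, ← (Fin.insertNthEquiv (fun _ => ι) s).sum_comp, Fintype.sum_prod_type,
    sum_comm]
  refine sum_congr rfl fun I _ => ?_
  rw [sumBelowMin, sum_filter, mul_sum]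
  refine sum_congr rfl fun j _ => ?_
  simp [Fin.forall_iff_succAbove s, Fin.prod_univ_succAbove _ s, mul_comm]

lemma sum_pow_succ_le_mul_sum_prod_mul_sumBelowMin [CommSemiring R] [PartialOrder R]
    [IsOrderedRing R] {a : ι → R} (ha : ∀ i, 0 ≤ a i) (k : ℕ) :
    (∑ i, a i) ^ (k + 1) ≤ (k + 1) * ∑ I : Fin k → ι, (∏ t, a (I t)) * sumBelowMin a I := by
  calc (∑ i, a i) ^ (k + 1) = ∑ J : Fin (k + 1) → ι, ∏ t, a (J t) := Fintype.sum_pow a _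
    _ ≤ ∑ s : Fin (k + 1), ∑ J ∈ univ.filter (fun J : Fin (k + 1) → ι => ∀ t, J s ≤ J t),
          ∏ t, a (J t) :=
      sum_le_sum_sum_filter_of_forall_exists (fun J _ => prod_nonneg fun t _ => ha (J t)) _
        fun J _ => by simpa using Finite.exists_min J
    _ = (k + 1) * ∑ I : Fin k → ι, (∏ t, a (I t)) * sumBelowMin a I := by
      simp [sum_filter_isMinAt_prod_eq]

end

lemma Real.rpow_sub_one_mul_le_rpow {x y α : ℝ} (hx : 0 ≤ x) (hxy : x ≤ y) (hα : α ≤ 1) :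
    y ^ (α - 1) * x ≤ x ^ α := by
  rcases hx.eq_or_lt with rfl | hx
  · simpa using Real.rpow_nonneg le_rfl α
  calc y ^ (α - 1) * x ≤ x ^ (α - 1) * x := by
        gcongr ?_ * x
        exact Real.rpow_le_rpow_of_nonpos hx hxy (by linarith)
    _ = x ^ α := by rw [← Real.rpow_add_one hx.ne']; ring_nf

/-- For every `k : ℕ`, `α ∈ [0,1]`, and every nonnegative finite sequence
`a : Fin n → ℝ`, we have
`(∑ i, a i)^(k+α) ≤ (k+1) * ∑_{i₁,…,i_k} a_{i₁}⋯a_{i_k} (∑_{j ≤ min iₜ} a_j)^α`. -/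
theorem stmt0 (k : ℕ) (α : ℝ) (hα0 : 0 ≤ α) (hα1 : α ≤ 1)
    (n : ℕ) (a : Fin n → ℝ) (ha : ∀ i, 0 ≤ a i) :
    (∑ i, a i) ^ ((k : ℝ) + α) ≤
      (k + 1) * ∑ I : Fin k → Fin n,
        (∏ t, a (I t)) *
          (∑ j ∈ univ.filter fun j => ∀ t, j ≤ I t, a j) ^ α := by
  -- The statement's `Decidable` instance for `∀ t, j ≤ I t` is not the generic one.
  have hm (I : Fin k → Fin n) :
      (∑ j ∈ univ.filter fun j => ∀ t, j ≤ I t, a j) = sumBelowMin a I := by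
    unfold sumBelowMin; congr
  simp_rw [hm]
  set S := ∑ i, a i
  rcases k.eq_zero_or_pos with rfl | hk
  · simp [sumBelowMin, S]
  have hS0 : 0 ≤ S := sum_nonneg fun i _ => ha i
  rcases hS0.eq_or_lt with hS | hS
  · rw [← hS, Real.zero_rpow (by positivity)]
    exact mul_nonneg (by positivity) <| sum_nonneg fun I _ =>
      mul_nonneg (prod_nonneg fun t _ => ha (I t)) (Real.rpow_nonneg (sumBelowMin_nonneg ha I) α)
  calc S ^ ((k : ℝ) + α) = S ^ (α - 1) * S ^ (k + 1) := by
        rw [← Real.rpow_natCast, ← Real.rpow_add hS]; push_cast; ring_nf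
    _ ≤ S ^ (α - 1) * ((k + 1) * ∑ I : Fin k → Fin n, (∏ t, a (I t)) * sumBelowMin a I) := by
        gcongr
        exact sum_pow_succ_le_mul_sum_prod_mul_sumBelowMin ha k
    _ = (k + 1) * ∑ I : Fin k → Fin n, (∏ t, a (I t)) * (S ^ (α - 1) * sumBelowMin a I) := by
        simp_rw [mul_sum]; ring_nf
    _ ≤ (k + 1) * ∑ I : Fin k → Fin n, (∏ t, a (I t)) * sumBelowMin a I ^ α := by
        gcongr with I
        · exact prod_nonneg fun t _ => ha (I t)
        · exact Real.rpow_sub_one_mul_le_rpow (sumBelowMin_nonneg ha I)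
            (sumBelowMin_le_sum ha I) hα1
end

section
/- For every cube Q ⊂ ℝ^d and every k ∈ ℕ, there exist α ∈ {0, 1/3, 2/3}^d and a shifted dyadic cube R ∈ 𝒟^α := {2^{-j}([0,1)^d + m + (−1)^j α) : j ∈ ℤ, m ∈ ℤ^d} such that Q ⊆ R, 2^k Q ⊆ R^{(k)}, and ℓ(R) ≤ 6·ℓ(Q). -/
/-- The shifted dyadic cube `2^{-j}([0,1)^d + m + (−1)^j α)` of the grid `𝒟^α`. -/
def shiftedDyadic (d : ℕ) (α : Fin d → ℝ) (j : ℤ) (m : Fin d → ℤ) :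
    Set (Fin d → ℝ) :=
  {x | ∀ i, (2 : ℝ) ^ (-j) * ((m i : ℝ) + (-1 : ℝ) ^ j * α i) ≤ x i ∧
      x i < (2 : ℝ) ^ (-j) * ((m i : ℝ) + 1 + (-1 : ℝ) ^ j * α i)}

/-- The (half-open) cube with lower corner `a` and side length `l`. -/
def cubeSet (d : ℕ) (a : Fin d → ℝ) (l : ℝ) : Set (Fin d → ℝ) :=
  {x | ∀ i, a i ≤ x i ∧ x i < a i + l}

/-- The concentric dilation `λ·Q` of the cube `Q = cubeSet d a l` by factor `λ`. -/
def dilatedCube (d : ℕ) (a : Fin d → ℝ) (l : ℝ) (lam : ℝ) : Set (Fin d → ℝ) :=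
  {x | ∀ i, a i + l / 2 - lam * l / 2 ≤ x i ∧ x i < a i + l / 2 + lam * l / 2}


/-! Fix the scale `2^{-j} ∈ [3ℓ(Q), 6ℓ(Q)]` and work coordinatewise. An interval of length at
most `s/3` contains a point of at most one of the three lattices `s(ℤ ± α)`, `α ∈ {0, 1/3, 2/3}`,
so some `α` leaves both the side of `Q` (at scale `2^{-j}`) and the side of `2^k Q` (at scale
`2^{k-j}`) inside single cells. Since `3 ∣ (−2)^k − 1`, the grid `𝒟^α` is nested, and the two
cells, which share a point, are a cell and its `k`-th ancestor. -/

open Set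

def IooMeetsLattice (x w s c : ℝ) : Prop :=
  ∃ m : ℤ, s * (m + c) ∈ Ioo x (x + w)

def dyadicIco (α : ℝ) (j m : ℤ) : Set ℝ :=
  Ico ((2 : ℝ) ^ (-j) * (m + (-1 : ℝ) ^ j * α)) ((2 : ℝ) ^ (-j) * (m + 1 + (-1 : ℝ) ^ j * α))

lemma shiftedDyadic_eq_pi (d : ℕ) (α : Fin d → ℝ) (j : ℤ) (m : Fin d → ℤ) :
    shiftedDyadic d α j m = univ.pi fun i => dyadicIco (α i) j (m i) := by
  ext x
  simp [shiftedDyadic, dyadicIco]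

lemma cubeSet_eq_pi (d : ℕ) (a : Fin d → ℝ) (l : ℝ) :
    cubeSet d a l = univ.pi fun i => Ico (a i) (a i + l) := by
  ext x
  simp [cubeSet]

lemma dilatedCube_eq_pi (d : ℕ) (a : Fin d → ℝ) (l lam : ℝ) :
    dilatedCube d a l lam =
      univ.pi fun i => Ico (a i + l / 2 - lam * l / 2) (a i + l / 2 + lam * l / 2) := by
  ext x
  simp [dilatedCube]

lemma exists_cell_of_not_IooMeetsLattice {x w s c : ℝ} (hs : 0 < s)
    (h : ¬ IooMeetsLattice x w s c) :
    ∃ m : ℤ, s * (m + c) ≤ x ∧ x + w ≤ s * (m + 1 + c) := by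
  set m := ⌊x / s - c⌋
  have hm : (m : ℝ) + c ≤ x / s := by linarith [Int.floor_le (x / s - c)]
  have hm₁ : x < s * ((m + 1 : ℤ) + c) := by
    push_cast
    rw [← div_lt_iff₀' hs]
    linarith [Int.lt_floor_add_one (x / s - c)]
  refine ⟨m, (le_div_iff₀' hs).1 hm, ?_⟩
  by_contra! hw
  exact h ⟨m + 1, hm₁, by push_cast; exact hw⟩

lemma one_third_le_abs_intCast_add (n : ℤ) {r : ℝ} (h₁ : 1 / 3 ≤ |r|) (h₂ : |r| ≤ 2 / 3) :
    1 / 3 ≤ |(n : ℝ) + r| := by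
  rcases lt_trichotomy n 0 with hn | rfl | hn
  · have : (n : ℝ) ≤ -1 := by exact_mod_cast Int.le_sub_one_of_lt hn
    rw [abs_le] at h₂
    exact le_abs.2 (Or.inr (by linarith))
  · simpa using h₁
  · have : (1 : ℝ) ≤ n := by exact_mod_cast hn
    rw [abs_le] at h₂
    exact le_abs.2 (Or.inl (by linarith))

lemma abs_sub_mem_Icc_of_mem_thirds {α α' : ℝ} (hα : α ∈ ({0, 1 / 3, 2 / 3} : Set ℝ))
    (hα' : α' ∈ ({0, 1 / 3, 2 / 3} : Set ℝ)) (hne : α ≠ α') :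
    1 / 3 ≤ |α - α'| ∧ |α - α'| ≤ 2 / 3 := by
  simp only [mem_insert_iff, mem_singleton_iff] at hα hα'
  rcases hα with rfl | rfl | rfl <;> rcases hα' with rfl | rfl | rfl <;>
    first | exact (hne rfl).elim | norm_num [abs_of_nonneg, abs_of_nonpos]

/-- Distinct shifts by thirds keep the lattice points at distance `≥ s/3` apart. -/
lemma eq_of_IooMeetsLattice {x w s ε α α' : ℝ} (hs : 0 < s) (hw : w ≤ s / 3) (hε : |ε| = 1)
    (hα : α ∈ ({0, 1 / 3, 2 / 3} : Set ℝ)) (hα' : α' ∈ ({0, 1 / 3, 2 / 3} : Set ℝ))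
    (h : IooMeetsLattice x w s (ε * α)) (h' : IooMeetsLattice x w s (ε * α')) : α = α' := by
  by_contra hne
  obtain ⟨m, hm₁, hm₂⟩ := h
  obtain ⟨m', hm₁', hm₂'⟩ := h'
  obtain ⟨hd₁, hd₂⟩ := abs_sub_mem_Icc_of_mem_thirds hα hα' hne
  have hεd : |ε * (α - α')| = |α - α'| := by rw [abs_mul, hε, one_mul]
  have hsep : s / 3 ≤ |s * (m + ε * α) - s * (m' + ε * α')| := by
    have key := one_third_le_abs_intCast_add (m - m') (hεd ▸ hd₁) (hεd ▸ hd₂)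
    rw [show s * (m + ε * α) - s * (m' + ε * α') = s * (((m - m' : ℤ) : ℝ) + ε * (α - α')) by
      push_cast; ring, abs_mul, abs_of_pos hs]
    linarith [mul_le_mul_of_nonneg_left key hs.le]
  have hclose : |s * (m + ε * α) - s * (m' + ε * α')| < w := by
    rw [abs_sub_lt_iff]
    constructor <;> linarith
  linarith

lemma exists_mem_thirds_not_IooMeetsLattice {x₁ w₁ s₁ ε₁ x₂ w₂ s₂ ε₂ : ℝ}
    (hs₁ : 0 < s₁) (hw₁ : w₁ ≤ s₁ / 3) (hε₁ : |ε₁| = 1)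
    (hs₂ : 0 < s₂) (hw₂ : w₂ ≤ s₂ / 3) (hε₂ : |ε₂| = 1) :
    ∃ α ∈ ({0, 1 / 3, 2 / 3} : Set ℝ),
      ¬ IooMeetsLattice x₁ w₁ s₁ (ε₁ * α) ∧ ¬ IooMeetsLattice x₂ w₂ s₂ (ε₂ * α) := by
  classical
  set S : Finset ℝ := {0, 1 / 3, 2 / 3}
  have hS {α : ℝ} (h : α ∈ S) : α ∈ ({0, 1 / 3, 2 / 3} : Set ℝ) := by simpa [S] using h
  have hcard : S.card = 3 := by norm_num [S]
  set B₁ := S.filter fun α => IooMeetsLattice x₁ w₁ s₁ (ε₁ * α)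
  set B₂ := S.filter fun α => IooMeetsLattice x₂ w₂ s₂ (ε₂ * α)
  have hB₁ : B₁.card ≤ 1 := Finset.card_le_one.2 fun α hα α' hα' => by
    rw [Finset.mem_filter] at hα hα'
    exact eq_of_IooMeetsLattice hs₁ hw₁ hε₁ (hS hα.1) (hS hα'.1) hα.2 hα'.2
  have hB₂ : B₂.card ≤ 1 := Finset.card_le_one.2 fun α hα α' hα' => by
    rw [Finset.mem_filter] at hα hα'
    exact eq_of_IooMeetsLattice hs₂ hw₂ hε₂ (hS hα.1) (hS hα'.1) hα.2 hα'.2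
  obtain ⟨α, hα⟩ : (S \ (B₁ ∪ B₂)).Nonempty := by
    rw [← Finset.card_pos]
    have := Finset.card_union_le B₁ B₂
    have := Finset.le_card_sdiff (B₁ ∪ B₂) S
    omega
  simp only [Finset.mem_sdiff, Finset.mem_union, B₁, B₂, Finset.mem_filter, not_or] at hα
  exact ⟨α, hS hα.1, fun h => hα.2.1 ⟨hα.1, h⟩, fun h => hα.2.2 ⟨hα.1, h⟩⟩

lemma exists_zpow_two_mem_Icc {x : ℝ} (hx : 0 < x) : ∃ n : ℤ, x ≤ 2 ^ n ∧ 2 ^ n ≤ 2 * x := by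
  obtain ⟨n, hn₁, hn₂⟩ := exists_mem_Ico_zpow hx one_lt_two
  refine ⟨n + 1, hn₂.le, ?_⟩
  rw [zpow_add_one₀ two_ne_zero]
  linarith

lemma Ico_lattice_subset_of_mem {s c x : ℝ} (hs : 0 < s) {m M M' : ℤ}
    (hx : x ∈ Ico (s * (m + c)) (s * (m + 1 + c)))
    (hx' : x ∈ Ico (s * (M + c)) (s * (M' + c))) :
    Ico (s * (m + c)) (s * (m + 1 + c)) ⊆ Ico (s * (M + c)) (s * (M' + c)) := by
  have hM : M ≤ m := by
    have : (M : ℝ) < m + 1 := by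
      have := (mul_lt_mul_iff_right₀ hs).1 (hx'.1.trans_lt hx.2)
      linarith
    exact Int.lt_add_one_iff.1 (by exact_mod_cast this)
  have hM' : (m : ℝ) + 1 ≤ M' := by
    have : (m : ℝ) < M' := by
      have := (mul_lt_mul_iff_right₀ hs).1 (hx.1.trans_lt hx'.2)
      linarith
    exact_mod_cast Int.add_one_le_iff.2 (by exact_mod_cast this)
  exact Ico_subset_Ico (by gcongr) (by gcongr)

lemma two_zpow_neg_sub (j : ℤ) (k : ℕ) : (2 : ℝ) ^ (-(j - k)) = 2 ^ k * 2 ^ (-j) := by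
  rw [neg_sub, zpow_sub₀ two_ne_zero, zpow_natCast, zpow_neg, div_eq_mul_inv]

/-- The shift `M - 2^k m' = (−1)^j α ((−2)^k − 1)` is an integer because `3 ∣ (−2)^k − 1`
and `3α ∈ ℤ`. -/
lemma exists_int_ancestor_endpoint_eq {α : ℝ} (hα : ∃ p : ℤ, (p : ℝ) = 3 * α) (j : ℤ) (k : ℕ)
    (m' : ℤ) :
    ∃ M : ℤ, (2 : ℝ) ^ (-(j - k)) * (m' + (-1 : ℝ) ^ (j - k) * α) =
      (2 : ℝ) ^ (-j) * (M + (-1 : ℝ) ^ j * α) := by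
  obtain ⟨p, hp⟩ := hα
  obtain ⟨q, hq⟩ : (3 : ℤ) ∣ (-2) ^ k - 1 := by
    simpa using sub_dvd_pow_sub_pow (-2 : ℤ) 1 k
  have hq' : (-1 : ℝ) ^ k * 2 ^ k - 1 = 3 * q := by
    rw [← neg_pow]
    exact_mod_cast hq
  refine ⟨2 ^ k * m' + j.negOnePow * q * p, ?_⟩
  push_cast
  rw [Int.cast_negOnePow, hp, two_zpow_neg_sub, zpow_sub₀ (by norm_num), zpow_natCast]
  rcases neg_one_pow_eq_or ℝ k with h | h <;> rw [h] at hq' ⊢ <;> field_simp <;>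
    linear_combination (-1 : ℝ) ^ j * α * hq'

lemma dyadicIco_subset_of_mem {α x : ℝ} (hα : ∃ p : ℤ, (p : ℝ) = 3 * α) {j : ℤ} {k : ℕ}
    {m m' : ℤ} (hx : x ∈ dyadicIco α j m) (hx' : x ∈ dyadicIco α (j - k) m') :
    dyadicIco α j m ⊆ dyadicIco α (j - k) m' := by
  obtain ⟨M, hM⟩ := exists_int_ancestor_endpoint_eq hα j k m'
  have hcell : dyadicIco α (j - k) m' =
      Ico ((2 : ℝ) ^ (-j) * (M + (-1 : ℝ) ^ j * α))
        ((2 : ℝ) ^ (-j) * (((M + 2 ^ k : ℤ) : ℝ) + (-1 : ℝ) ^ j * α)) := by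
    rw [dyadicIco, hM]
    congr 1
    push_cast
    linear_combination hM + two_zpow_neg_sub j k
  rw [hcell] at hx' ⊢
  exact Ico_lattice_subset_of_mem (zpow_pos two_pos _) hx hx'

lemma exists_dyadicIco_nested (j : ℤ) (k : ℕ) {a l : ℝ} (hl : 0 < l)
    (hj : 3 * l ≤ (2 : ℝ) ^ (-j)) :
    ∃ α ∈ ({0, 1 / 3, 2 / 3} : Set ℝ), ∃ m m' : ℤ,
      Ico a (a + l) ⊆ dyadicIco α j m ∧ dyadicIco α j m ⊆ dyadicIco α (j - k) m' ∧
      Ico (a + l / 2 - 2 ^ k * l / 2) (a + l / 2 + 2 ^ k * l / 2) ⊆ dyadicIco α (j - k) m' := by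
  have h2k : (1 : ℝ) ≤ 2 ^ k := one_le_pow₀ one_le_two
  obtain ⟨α, hα, hfine, hcoarse⟩ := exists_mem_thirds_not_IooMeetsLattice
    (x₁ := a) (w₁ := l) (x₂ := a + l / 2 - 2 ^ k * l / 2) (w₂ := 2 ^ k * l)
    (zpow_pos two_pos (-j)) (by linarith) (abs_neg_one_zpow j) (zpow_pos two_pos (-(j - k)))
    (by rw [two_zpow_neg_sub]; nlinarith) (abs_neg_one_zpow (j - k))
  obtain ⟨m, hm₁, hm₂⟩ := exists_cell_of_not_IooMeetsLattice (zpow_pos two_pos _) hfine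
  obtain ⟨m', hm₁', hm₂'⟩ := exists_cell_of_not_IooMeetsLattice (zpow_pos two_pos _) hcoarse
  have hα' : ∃ p : ℤ, (p : ℝ) = 3 * α := by
    simp only [mem_insert_iff, mem_singleton_iff] at hα
    rcases hα with rfl | rfl | rfl
    exacts [⟨0, by norm_num⟩, ⟨1, by norm_num⟩, ⟨2, by norm_num⟩]
  have hQ : Ico a (a + l) ⊆ dyadicIco α j m := Ico_subset_Ico hm₁ hm₂
  have hkQ : Ico (a + l / 2 - 2 ^ k * l / 2) (a + l / 2 + 2 ^ k * l / 2) ⊆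
      dyadicIco α (j - k) m' := Ico_subset_Ico hm₁' (by linarith)
  have ha : a ∈ Ico a (a + l) := left_mem_Ico.2 (by linarith)
  refine ⟨α, hα, m, m', hQ, dyadicIco_subset_of_mem hα' (hQ ha) (hkQ ?_), hkQ⟩
  constructor <;> nlinarith

/-- for every cube `Q ⊂ ℝ^d` and every `k ∈ ℕ` there are
`α ∈ {0,1/3,2/3}^d` and a shifted dyadic cube `R ∈ 𝒟^α` such that `Q ⊆ R`,
`2^k Q ⊆ R^{(k)}` (the `k`-th generation ancestor of `R` in `𝒟^α`), and
`ℓ(R) ≤ 6 ℓ(Q)`. -/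
theorem stmt6 (d : ℕ) (a : Fin d → ℝ) (l : ℝ) (hl : 0 < l) (k : ℕ) :
    ∃ α : Fin d → ℝ, (∀ i, α i ∈ ({0, 1/3, 2/3} : Set ℝ)) ∧
      ∃ (j : ℤ) (m : Fin d → ℤ),
        cubeSet d a l ⊆ shiftedDyadic d α j m ∧
        (2 : ℝ) ^ (-j) ≤ 6 * l ∧
        ∃ m' : Fin d → ℤ,
          shiftedDyadic d α j m ⊆ shiftedDyadic d α (j - k) m' ∧
          dilatedCube d a l (2 ^ k) ⊆ shiftedDyadic d α (j - k) m' := by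
  obtain ⟨n, hn₁, hn₂⟩ := exists_zpow_two_mem_Icc (by positivity : 0 < 3 * l)
  have hj : (2 : ℝ) ^ (-(-n)) = 2 ^ n := by rw [neg_neg]
  choose α hα m m' hQ hR hkQ using fun i => exists_dyadicIco_nested (-n) k (a := a i) hl (hj ▸ hn₁)
  refine ⟨α, hα, -n, m, ?_, by linarith, m', ?_, ?_⟩
  · rw [cubeSet_eq_pi, shiftedDyadic_eq_pi]
    exact pi_mono fun i _ => hQ i
  · rw [shiftedDyadic_eq_pi, shiftedDyadic_eq_pi]
    exact pi_mono fun i _ => hR i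
  · rw [dilatedCube_eq_pi, shiftedDyadic_eq_pi]
    exact pi_mono fun i _ => hkQ i
end
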